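/- arXiv:math/0510155 — 2 statements merged into one kernel-verified Lean document; each statement's English description precedes it below -/
import Mathlib

section
/- As n → ∞, P(n) ∼ (n!/2) · (1/log 2)^{n+1}. -/
open scoped BigOperators

/-- A zero-one matrix (entries in `Bool`) with no zero rows and no zero columns. -/
def IsIncidence {k l : ℕ} (M : Matrix (Fin k) (Fin l) Bool) : Prop :=
  (∀ i, ∃ j, M i j = true) ∧ (∀ j, ∃ i, M i j = true)

/-- The number of entries equal to one in a zero-one matrix. -/
def numOnes {k l : ℕ} (M : Matrix (Fin k) (Fin l) Bool) : ℕ :=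
  (Finset.univ.filter fun p : Fin k × Fin l => M p.1 p.2 = true).card

/-- `F₁₁₁₁ n`: the number of incidence matrices (of any size) with exactly `n` ones. -/
noncomputable def F1111 (n : ℕ) : ℕ :=
  Nat.card {A : Σ k l : ℕ, Matrix (Fin k) (Fin l) Bool //
    IsIncidence A.2.2 ∧ numOnes A.2.2 = n}

noncomputable def mIJ (i j n : ℕ) : ℕ :=
  Nat.card {M : Matrix (Fin i) (Fin j) Bool // IsIncidence M ∧ numOnes M = n}

/-- total preorders on `Fin n` -/
noncomputable def numPreorders (n : ℕ) : ℕ :=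
  Nat.card {R : Fin n → Fin n → Prop //
    (∀ x, R x x) ∧ (∀ x y z, R x y → R y z → R x z) ∧ (∀ x y, R x y ∨ x = y ∨ R y x)}

noncomputable def numPreordersWithBlocks (n k : ℕ) : ℕ :=
  Nat.card {R : Fin n → Fin n → Prop //
    ((∀ x, R x x) ∧ (∀ x y z, R x y → R y z → R x z) ∧ (∀ x y, R x y ∨ x = y ∨ R y x)) ∧
    Nat.card (Quot fun x y => R x y ∧ R y x) = k}

noncomputable def S11 (n : ℕ) : ℕ :=
  Nat.card {A : Σ k : ℕ, Matrix (Fin k) (Fin k) Bool //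
    (∀ i j, A.2 i j = A.2 j i) ∧ IsIncidence A.2 ∧ numOnes A.2 = n}

def trSigma : (Σ k l : ℕ, Matrix (Fin k) (Fin l) Bool) → (Σ k l : ℕ, Matrix (Fin k) (Fin l) Bool) :=
  fun A => ⟨A.2.1, A.1, A.2.2.transpose⟩

noncomputable def Phi11 (n : ℕ) : ℕ :=
  Nat.card (Quot fun x y : {A : Σ k l : ℕ, Matrix (Fin k) (Fin l) Bool //
    IsIncidence A.2.2 ∧ numOnes A.2.2 = n} => trSigma x.1 = y.1)

noncomputable def F1011 (n : ℕ) : ℕ :=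
  Nat.card {A : Σ k l : ℕ, Matrix (Fin k) (Fin l) Bool //
    IsIncidence A.2.2 ∧ numOnes A.2.2 = n ∧
    ∀ i i' : Fin A.1, (∀ j, A.2.2 i j = A.2.2 i' j) → i = i'}

noncomputable def F0001 (n : ℕ) : ℕ :=
  Nat.card (Quot fun x y : {A : Σ k l : ℕ, Matrix (Fin k) (Fin l) Bool //
      IsIncidence A.2.2 ∧ numOnes A.2.2 = n ∧
      ∀ i i' : Fin A.1, (∀ j, A.2.2 i j = A.2.2 i' j) → i = i'} =>
    ∃ σ : Equiv.Perm (Fin x.1.1), ∃ τ : Equiv.Perm (Fin x.1.2.1),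
      y.1 = ⟨x.1.1, x.1.2.1, Matrix.of fun i j => x.1.2.2 (σ i) (τ j)⟩)

noncomputable def numInvolutions (n : ℕ) : ℕ :=
  Nat.card {σ : Equiv.Perm (Fin n) // σ * σ = 1}

/-- number of cycles of a permutation, counting fixed points as cycles -/
def numCycles {n : ℕ} (σ : Equiv.Perm (Fin n)) : ℕ :=
  Multiset.card σ.cycleType + (n - σ.support.card)

/-- unsigned Stirling number of the first kind: permutations of `n` with `k` cycles -/
noncomputable def stirling1Unsigned (n k : ℕ) : ℕ :=
  Nat.card {σ : Equiv.Perm (Fin n) // numCycles σ = k}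

/-- Stirling number of the second kind: partitions of an `n`-set into `k` blocks -/
noncomputable def stirling2 (n k : ℕ) : ℕ :=
  Nat.card {c : Setoid (Fin n) // Nat.card (Quotient c) = k}

noncomputable def sSym (k n : ℕ) : ℕ :=
  Nat.card {M : Matrix (Fin k) (Fin k) Bool // (∀ a b, M a b = M b a) ∧ numOnes M = n}

noncomputable def muSym (i n : ℕ) : ℕ :=
  Nat.card {M : Matrix (Fin i) (Fin i) Bool //
    (∀ a b, M a b = M b a) ∧ IsIncidence M ∧ numOnes M = n}

/-!
Sending a surjection `f : Fin n → Fin k` to the preorder `f x ≤ f y` is a bijection onto the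
total preorders, so `P(n) = ∑ₖ surj(n, k)`. Grouping the maps `Fin n → Fin j` by their image
gives `j ^ n = ∑ₖ (j choose k) surj(n, k)`, and `∑ⱼ (j choose k) / 2 ^ (j + 1) = 1`, whence
`P(n) = ∑ⱼ j ^ n / 2 ^ (j + 1)`. Now `j ^ n / 2 ^ j = f j` for `f x = x ^ n e^{-x log 2}`,
which increases up to `n / log 2` and decreases afterwards; so the series differs from
`∫₀^∞ f = n! / (log 2) ^ (n + 1)` by at most `2 f (n / log 2)`, which by Stirling's bound
`n! ≥ √(2πn) (n/e)ⁿ` is `O(n^{-1/2})` relative to the integral.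
-/

open Function Finset

section TotalPreorder

variable {α : Type*}

def IsTotalPreorder (r : α → α → Prop) : Prop :=
  (∀ x y z, r x y → r y z → r x z) ∧ ∀ x y, r x y ∨ r y x

variable (α) in
noncomputable def numSurjections (k : ℕ) : ℕ :=
  Nat.card {f : α → Fin k // Surjective f}

theorem isTotalPreorder_fin_le {k : ℕ} (f : α → Fin k) : IsTotalPreorder fun x y => f x ≤ f y :=
  ⟨fun _ _ _ => le_trans, fun x y => le_total (f x) (f y)⟩

theorem Fin.eq_of_surjective_of_le_iff {a b : ℕ} {f : α → Fin a} {g : α → Fin b}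
    (hf : Surjective f) (hg : Surjective g) (h : ∀ x y, f x ≤ f y ↔ g x ≤ g y) :
    a = b ∧ ∀ x, (f x : ℕ) = g x := by
  set u : Fin a → Fin b := fun i => g (surjInv hf i)
  have hu : ∀ x, u (f x) = g x := fun x =>
    le_antisymm ((h _ _).1 (surjInv_eq hf (f x)).le) ((h _ _).1 (surjInv_eq hf (f x)).ge)
  have u_strictMono : StrictMono u := by
    intro i j hij
    obtain ⟨x, rfl⟩ := hf i
    obtain ⟨y, rfl⟩ := hf j
    rw [hu, hu, lt_iff_not_ge, ← h, ← lt_iff_not_ge]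
    exact hij
  have u_surjective : Surjective u := fun j =>
    let ⟨x, hx⟩ := hg j; ⟨f x, (hu x).trans hx⟩
  let e := u_strictMono.orderIsoOfSurjective u u_surjective
  refine ⟨by simpa using Fintype.card_congr e.toEquiv, fun x => ?_⟩
  rw [← hu, ← Fin.coe_orderIso_apply e]
  rfl

variable [Fintype α]

theorem exists_surjective_fin_le_iff {β : Type*} [LinearOrder β] (φ : α → β) :
    ∃ k ≤ Fintype.card α, ∃ f : α → Fin k, Surjective f ∧ ∀ x y, f x ≤ f y ↔ φ x ≤ φ y := by
  classical
  set s := univ.image φ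
  let e := s.orderIsoOfFin rfl
  have mem : ∀ x, φ x ∈ s := fun x => mem_image_of_mem φ (mem_univ x)
  refine ⟨#s, card_image_le, fun x => e.symm ⟨φ x, mem x⟩, fun i => ?_, fun x y => ?_⟩
  · obtain ⟨x, -, hx⟩ := mem_image.1 (e i).2
    exact ⟨x, by simp [hx]⟩
  · rw [e.symm.le_iff_le, Subtype.mk_le_mk]

theorem IsTotalPreorder.rel_iff_card_le {r : α → α → Prop} (hr : IsTotalPreorder r)
    [DecidableRel r] (x y : α) : r x y ↔ #{z | r z x} ≤ #{z | r z y} := by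
  refine ⟨fun hxy => card_le_card fun z hz => ?_, fun hle => ?_⟩
  · simp only [mem_filter, mem_univ, true_and] at hz ⊢
    exact hr.1 _ _ _ hz hxy
  · by_contra hxy
    have hyx : r y x := (hr.2 x y).resolve_left hxy
    refine hle.not_gt (card_lt_card ⟨fun z hz => ?_, fun hsub => hxy ?_⟩)
    · simp only [mem_filter, mem_univ, true_and] at hz ⊢
      exact hr.1 _ _ _ hz hyx
    · simpa using hsub (by simpa using (hr.2 x x).elim id id)

theorem IsTotalPreorder.exists_surjective_fin {r : α → α → Prop} (hr : IsTotalPreorder r) :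
    ∃ k ≤ Fintype.card α, ∃ f : α → Fin k, Surjective f ∧ ∀ x y, f x ≤ f y ↔ r x y := by
  classical
  obtain ⟨k, hk, f, hf, hle⟩ := exists_surjective_fin_le_iff fun x => #{z | r z x}
  exact ⟨k, hk, f, hf, fun x y => (hle x y).trans (hr.rel_iff_card_le x y).symm⟩

variable (α) in
noncomputable def sigmaSurjectiveEquivTotalPreorder :
    (Σ k : Fin (Fintype.card α + 1), {f : α → Fin k // Surjective f}) ≃
      {r : α → α → Prop // IsTotalPreorder r} :=
  Equiv.ofBijective (fun p => ⟨fun x y => p.2.1 x ≤ p.2.1 y, isTotalPreorder_fin_le p.2.1⟩) <| by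
    constructor
    · rintro ⟨a, f, hf⟩ ⟨b, g, hg⟩ hfg
      have hle : ∀ x y, f x ≤ f y ↔ g x ≤ g y := fun x y =>
        iff_of_eq (congrFun (congrFun (congrArg Subtype.val hfg) x) y)
      obtain ⟨hab, hval⟩ := Fin.eq_of_surjective_of_le_iff hf hg hle
      obtain rfl : a = b := Fin.ext hab
      obtain rfl : f = g := funext fun x => Fin.ext (hval x)
      rfl
    · rintro ⟨r, hr⟩
      obtain ⟨k, hk, f, hf, hle⟩ := hr.exists_surjective_fin
      exact ⟨⟨⟨k, Nat.lt_succ_of_le hk⟩, f, hf⟩, Subtype.ext (funext₂ fun x y => propext (hle x y))⟩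

theorem card_totalPreorder_eq_sum_numSurjections :
    Nat.card {r : α → α → Prop // IsTotalPreorder r} =
      ∑ k ∈ range (Fintype.card α + 1), numSurjections α k := by
  rw [← Nat.card_congr (sigmaSurjectiveEquivTotalPreorder α), Nat.card_sigma,
    ← Fin.sum_univ_eq_sum_range]
  rfl

theorem numSurjections_eq_zero {k : ℕ} (hk : Fintype.card α < k) : numSurjections α k = 0 := by
  refine Nat.card_eq_zero.2 (Or.inl ⟨fun f => hk.not_ge ?_⟩)
  simpa using Fintype.card_le_of_surjective f.1 f.2

def imageEqEquivSurjective {β : Type*} [DecidableEq β] (s : Finset β) :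
    {f : α → β // univ.image f = s} ≃ {F : α → s // Surjective F} where
  toFun := fun ⟨f, hf⟩ => ⟨fun x => ⟨f x, hf ▸ mem_image_of_mem f (mem_univ x)⟩, fun y => by
    obtain ⟨x, -, hx⟩ := mem_image.1 (hf.symm ▸ y.2 : y.1 ∈ univ.image f)
    exact ⟨x, Subtype.ext hx⟩⟩
  invFun F := ⟨fun x => F.1 x, by
    ext y
    refine ⟨fun hy => ?_, fun hy => ?_⟩
    · obtain ⟨x, -, rfl⟩ := mem_image.1 hy
      exact (F.1 x).2
    · obtain ⟨x, hx⟩ := F.2 ⟨y, hy⟩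
      exact mem_image.2 ⟨x, mem_univ x, congrArg Subtype.val hx⟩⟩
  left_inv _ := rfl
  right_inv _ := rfl

theorem card_image_eq_numSurjections {β : Type*} [DecidableEq β] [Fintype (α → β)]
    (s : Finset β) : #{f : α → β | univ.image f = s} = numSurjections α #s := by
  rw [← Fintype.card_subtype, ← Nat.card_eq_fintype_card, numSurjections,
    Nat.card_congr (imageEqEquivSurjective s)]
  exact Nat.card_congr <| Equiv.subtypeEquiv ((Equiv.refl α).arrowCongr s.equivFin) fun F =>
    (s.equivFin.comp_surjective F).symm

theorem pow_card_eq_sum_choose_mul_numSurjections (j : ℕ) :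
    j ^ Fintype.card α = ∑ k ∈ range (Fintype.card α + 1), j.choose k * numSurjections α k := by
  classical
  have fiberwise :
      j ^ Fintype.card α = ∑ s : Finset (Fin j), #{f : α → Fin j | univ.image f = s} := by
    simpa using card_eq_sum_card_fiberwise (s := univ) (t := univ)
      (f := fun f : α → Fin j => univ.image f) (by simp)
  simp only [fiberwise, card_image_eq_numSurjections]
  rw [← powerset_univ, sum_powerset_apply_card]
  simp only [card_univ, Fintype.card_fin, smul_eq_mul]
  have large_j : ∀ k ∈ range (j + Fintype.card α + 1), k ∉ range (j + 1) →
      j.choose k * numSurjections α k = 0 := fun k _ hk => by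
    rw [Nat.choose_eq_zero_of_lt (by simpa using hk), zero_mul]
  have large_α : ∀ k ∈ range (j + Fintype.card α + 1), k ∉ range (Fintype.card α + 1) →
      j.choose k * numSurjections α k = 0 := fun k _ hk => by
    rw [numSurjections_eq_zero (by simpa using hk), mul_zero]
  rw [sum_subset (range_subset_range.2 (by omega)) large_j,
    sum_subset (range_subset_range.2 (by omega)) large_α]

theorem hasSum_choose_div_two_pow (k : ℕ) :
    HasSum (fun j : ℕ => (j.choose k : ℝ) / 2 ^ (j + 1)) 1 := by
  have geometric := (hasSum_choose_mul_geometric_of_norm_lt_one k (r := (2 : ℝ)⁻¹)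
    (by norm_num [abs_of_pos])).div_const (2 ^ (k + 1))
  rw [show 1 / (1 - (2 : ℝ)⁻¹) ^ (k + 1) / 2 ^ (k + 1) = 1 by
    field_simp; rw [← mul_pow]; norm_num] at geometric
  rw [← hasSum_nat_add_iff' k]
  have : ∑ j ∈ range k, (j.choose k : ℝ) / 2 ^ (j + 1) = 0 :=
    sum_eq_zero fun j hj => by rw [Nat.choose_eq_zero_of_lt (mem_range.1 hj)]; simp
  rw [this, sub_zero]
  refine geometric.congr_fun fun j => ?_
  rw [add_right_comm, pow_add, inv_pow]
  field_simp
  ring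

theorem hasSum_pow_card_div_two_pow :
    HasSum (fun j : ℕ => (j : ℝ) ^ Fintype.card α / 2 ^ (j + 1))
      (Nat.card {r : α → α → Prop // IsTotalPreorder r}) := by
  have := hasSum_sum fun k (_ : k ∈ range (Fintype.card α + 1)) =>
    (hasSum_choose_div_two_pow k).mul_left (numSurjections α k : ℝ)
  simp only [mul_one] at this
  rw [card_totalPreorder_eq_sum_numSurjections, Nat.cast_sum]
  refine this.congr_fun fun j => ?_
  rw [← Nat.cast_pow, pow_card_eq_sum_choose_mul_numSurjections, Nat.cast_sum, sum_div]
  push_cast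
  exact sum_congr rfl fun k _ => by ring

end TotalPreorder

open Real Set MeasureTheory Filter Topology

theorem integral_Ioi_eq_add_add {f : ℝ → ℝ} {a b c : ℝ} (hab : a ≤ b) (hbc : b ≤ c)
    (integrable : IntegrableOn f (Ioi a)) :
    ∫ x in Ioi a, f x = (∫ x in a..b, f x) + (∫ x in b..c, f x) + ∫ x in Ioi c, f x := by
  have intervalIntegrable : ∀ u v, a ≤ u → u ≤ v → IntervalIntegrable f volume u v :=
    fun u v hu huv => (intervalIntegrable_iff_integrableOn_Ioc_of_le huv).2
      (integrable.mono_set fun x hx => hu.trans_lt hx.1)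
  rw [← intervalIntegral.integral_interval_add_Ioi integrable
      (integrable.mono_set (Ioi_subset_Ioi (hab.trans hbc))),
    intervalIntegral.integral_add_adjacent_intervals (intervalIntegrable a b le_rfl hab)
      (intervalIntegrable b c hab hbc)]

theorem le_of_monotoneOn_of_antitoneOn {f : ℝ → ℝ} {a c x : ℝ} (mono : MonotoneOn f (Icc a c))
    (anti : AntitoneOn f (Ici c)) (hac : a ≤ c) (hx : a ≤ x) : f x ≤ f c :=
  (le_total x c).elim (fun h => mono ⟨hx, h⟩ ⟨hac, le_rfl⟩ h)
    (fun h => anti (mem_Ici.2 le_rfl) h h)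

theorem MonotoneOn.sum_range_succ_sub_integral_mem_Icc {f : ℝ → ℝ} {m : ℕ}
    (mono : MonotoneOn f (Icc 0 m)) :
    ∑ i ∈ range (m + 1), f i - ∫ x in (0 : ℝ)..m, f x ∈ Icc (f 0) (f m) := by
  have mono' : MonotoneOn f (Icc ((0 : ℕ) : ℝ) m) := by rwa [Nat.cast_zero]
  have sum_le := mono'.sum_le_integral_Ico (Nat.zero_le m)
  have le_sum := mono'.integral_le_sum_Ico (Nat.zero_le m)
  rw [Nat.cast_zero, ← range_eq_Ico] at sum_le le_sum
  have last := sum_range_succ (fun i : ℕ => f i) m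
  have first := sum_range_succ' (fun i : ℕ => f i) m
  rw [Nat.cast_zero] at first
  constructor <;> linarith

theorem AntitoneOn.tsum_comp_add_sub_integral_mem_Icc {f : ℝ → ℝ} {N : ℕ}
    (anti : AntitoneOn f (Ici N)) (integrable : IntegrableOn f (Ioi N))
    (nonneg : ∀ x ∈ Ioi (N : ℝ), 0 ≤ f x) :
    ∑' n : ℕ, f ↑(n + N) - ∫ x in Ioi (N : ℝ), f x ∈ Icc 0 (f N) := by
  have summable := anti.summable_of_integrableOn_Ioi integrable nonneg
  have tail_le := anti.tsum_comp_add_le_integral N integrable nonneg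
  have le_tsum := anti.integral_le_tsum_comp_add N summable nonneg
  have shift : ∑' n : ℕ, f ↑(n + N) = f N + ∑' n : ℕ, f ↑(n + N + 1) := by
    rw [((summable_nat_add_iff N).2 summable).tsum_eq_zero_add, zero_add]
    simp only [Nat.add_right_comm _ 1]
  constructor <;> linarith

theorem abs_tsum_sub_integral_le_of_unimodal {f : ℝ → ℝ} {c : ℝ} (hc : 0 ≤ c)
    (mono : MonotoneOn f (Icc 0 c)) (anti : AntitoneOn f (Ici c))
    (nonneg : ∀ x, 0 ≤ x → 0 ≤ f x) (integrable : IntegrableOn f (Ioi 0)) :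
    |∑' j : ℕ, f j - ∫ x in Ioi 0, f x| ≤ 2 * f c := by
  -- Compare sum and integral on `[0, m]` and on `[m + 1, ∞)`, where `f` is monotone resp.
  -- antitone; the piece over `[m, m + 1]` lies in `[0, f c]`.
  set m := ⌊c⌋₊
  have hm : (m : ℝ) ≤ c := Nat.floor_le hc
  have hm' : c ≤ ((m + 1 : ℕ) : ℝ) := by push_cast; exact (Nat.lt_floor_add_one c).le
  have le_max : ∀ x, 0 ≤ x → f x ≤ f c := fun x => le_of_monotoneOn_of_antitoneOn mono anti hc
  have nonneg' : ∀ x ∈ Ioi ((m + 1 : ℕ) : ℝ), 0 ≤ f x := fun x hx =>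
    nonneg x ((Nat.cast_nonneg _).trans hx.le)
  have integrable' : IntegrableOn f (Ioi ((m + 1 : ℕ) : ℝ)) :=
    integrable.mono_set (Ioi_subset_Ioi (Nat.cast_nonneg _))
  have anti' : AntitoneOn f (Ici ((m + 1 : ℕ) : ℝ)) := anti.mono (Ici_subset_Ici.2 hm')
  have head := (mono.mono (Icc_subset_Icc le_rfl hm)).sum_range_succ_sub_integral_mem_Icc
  have tail := anti'.tsum_comp_add_sub_integral_mem_Icc integrable' nonneg'
  have middle_nonneg : 0 ≤ ∫ x in (m : ℝ)..((m + 1 : ℕ) : ℝ), f x :=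
    intervalIntegral.integral_nonneg (Nat.cast_le.2 m.le_succ) fun x hx =>
      nonneg x ((Nat.cast_nonneg _).trans hx.1)
  have middle_le : ∫ x in (m : ℝ)..((m + 1 : ℕ) : ℝ), f x ≤ f c := by
    refine (Real.le_norm_self _).trans
      ((intervalIntegral.norm_integral_le_of_norm_le_const (C := f c) fun x hx => ?_).trans_eq
        (by simp))
    rw [uIoc_of_le (Nat.cast_le.2 m.le_succ)] at hx
    have hx0 : 0 ≤ x := (Nat.cast_nonneg m).trans hx.1.le
    rw [Real.norm_of_nonneg (nonneg x hx0)]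
    exact le_max x hx0
  have := le_max m (Nat.cast_nonneg m)
  have := le_max ↑(m + 1) (Nat.cast_nonneg _)
  have := nonneg 0 le_rfl
  rw [← (anti'.summable_of_integrableOn_Ioi integrable' nonneg').sum_add_tsum_nat_add (m + 1),
    integral_Ioi_eq_add_add (c := ((m + 1 : ℕ) : ℝ)) (Nat.cast_nonneg m) (Nat.cast_le.2 m.le_succ)
      integrable, abs_le]
  constructor <;> linarith [head.1, head.2, tail.1, tail.2]

noncomputable def powMulExpNeg (n : ℕ) (t x : ℝ) : ℝ := x ^ n * exp (-(t * x))

section PowMulExpNeg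

variable {t : ℝ}

theorem powMulExpNeg_nonneg (n : ℕ) {x : ℝ} (hx : 0 ≤ x) : 0 ≤ powMulExpNeg n t x := by
  unfold powMulExpNeg; positivity

theorem continuous_powMulExpNeg (n : ℕ) : Continuous (powMulExpNeg n t) := by
  unfold powMulExpNeg; fun_prop

theorem integral_powMulExpNeg (n : ℕ) (ht : 0 < t) :
    ∫ x in Ioi 0, powMulExpNeg n t x = n.factorial / t ^ (n + 1) := by
  have := integral_rpow_mul_exp_neg_mul_Ioi (a := n + 1) (by positivity) ht
  rw [add_sub_cancel_right, Real.Gamma_nat_eq_factorial] at this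
  simp only [rpow_natCast] at this
  unfold powMulExpNeg
  rw [this, ← Nat.cast_succ, rpow_natCast, one_div, inv_pow, inv_mul_eq_div]

theorem integrableOn_powMulExpNeg (n : ℕ) (ht : 0 < t) :
    IntegrableOn (powMulExpNeg n t) (Ioi 0) :=
  Integrable.of_integral_ne_zero <| by rw [integral_powMulExpNeg n ht]; positivity

theorem hasDerivAt_powMulExpNeg (n : ℕ) {x : ℝ} (hx : x ≠ 0) :
    HasDerivAt (powMulExpNeg n t) (powMulExpNeg n t x * (n - t * x) / x) x := by
  have hexp : HasDerivAt (fun x => exp (-(t * x))) (exp (-(t * x)) * -t) x := by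
    simpa using ((hasDerivAt_id x).const_mul t).neg.exp
  refine ((hasDerivAt_pow n x).mul hexp).congr_deriv ?_
  unfold powMulExpNeg
  rcases n with _ | n
  · field_simp
    simp [mul_comm]
  · simp only [Nat.add_sub_cancel, pow_succ]
    field_simp
    ring

theorem monotoneOn_powMulExpNeg (n : ℕ) (ht : 0 < t) :
    MonotoneOn (powMulExpNeg n t) (Icc 0 (n / t)) := by
  refine monotoneOn_of_hasDerivWithinAt_nonneg (convex_Icc _ _)
    (f' := fun x => powMulExpNeg n t x * (n - t * x) / x)
    (continuous_powMulExpNeg n).continuousOn ?_ ?_ <;> rw [interior_Icc] <;> intro x hx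
  · exact (hasDerivAt_powMulExpNeg n hx.1.ne').hasDerivWithinAt
  · have := (lt_div_iff₀' ht).1 hx.2
    exact div_nonneg (mul_nonneg (powMulExpNeg_nonneg n hx.1.le) (by linarith)) hx.1.le

theorem antitoneOn_powMulExpNeg (n : ℕ) (ht : 0 < t) :
    AntitoneOn (powMulExpNeg n t) (Ici (n / t)) := by
  have hc : 0 ≤ n / t := by positivity
  refine antitoneOn_of_hasDerivWithinAt_nonpos (convex_Ici _)
    (f' := fun x => powMulExpNeg n t x * (n - t * x) / x)
    (continuous_powMulExpNeg n).continuousOn ?_ ?_ <;> rw [interior_Ici] <;> intro x hx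
  · exact (hasDerivAt_powMulExpNeg n (hc.trans_lt hx).ne').hasDerivWithinAt
  · have hx0 : 0 < x := hc.trans_lt hx
    have := (div_lt_iff₀' ht).1 hx
    exact div_nonpos_of_nonpos_of_nonneg
      (mul_nonpos_of_nonneg_of_nonpos (powMulExpNeg_nonneg n hx0.le) (by linarith)) hx0.le

theorem powMulExpNeg_div_mul_div_factorial_le {n : ℕ} (hn : n ≠ 0) (ht : 0 < t) :
    powMulExpNeg n t (n / t) * t ^ (n + 1) / n.factorial ≤ t / √(2 * π * n) := by
  have : powMulExpNeg n t (n / t) * t ^ (n + 1) = t * (n / exp 1) ^ n := by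
    rw [powMulExpNeg, mul_div_cancel₀ _ ht.ne', exp_neg, ← exp_one_pow, div_pow, div_pow]
    field_simp
    ring
  rw [this, div_le_div_iff₀ (by positivity) (by positivity), mul_assoc, mul_comm _ √_]
  exact mul_le_mul_of_nonneg_left (Stirling.le_factorial_stirling n) ht.le

theorem abs_tsum_powMulExpNeg_mul_div_factorial_sub_one_le {n : ℕ} (hn : n ≠ 0) (ht : 0 < t) :
    |(∑' j : ℕ, powMulExpNeg n t j) * t ^ (n + 1) / n.factorial - 1| ≤ 2 * t / √(2 * π * n) := by
  have hq : 0 < t ^ (n + 1) / n.factorial := by positivity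
  have sum_sub_integral := abs_tsum_sub_integral_le_of_unimodal (by positivity)
    (monotoneOn_powMulExpNeg n ht) (antitoneOn_powMulExpNeg n ht)
    (fun _ hx => powMulExpNeg_nonneg n hx) (integrableOn_powMulExpNeg n ht)
  rw [integral_powMulExpNeg n ht] at sum_sub_integral
  calc |(∑' j : ℕ, powMulExpNeg n t j) * t ^ (n + 1) / n.factorial - 1|
      = |∑' j : ℕ, powMulExpNeg n t j - n.factorial / t ^ (n + 1)| *
          (t ^ (n + 1) / n.factorial) := by
        rw [← abs_of_pos hq, ← abs_mul]
        congr 1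
        field_simp
    _ ≤ 2 * powMulExpNeg n t (n / t) * (t ^ (n + 1) / n.factorial) := by gcongr
    _ ≤ 2 * t / √(2 * π * n) := by
        rw [mul_assoc, ← mul_div_assoc, mul_div_assoc 2 t]
        exact mul_le_mul_of_nonneg_left (powMulExpNeg_div_mul_div_factorial_le hn ht) zero_le_two

theorem tendsto_tsum_powMulExpNeg_mul_div_factorial (ht : 0 < t) :
    Tendsto (fun n : ℕ => (∑' j : ℕ, powMulExpNeg n t j) * t ^ (n + 1) / n.factorial) atTop
      (𝓝 1) := by
  have bound : Tendsto (fun n : ℕ => 2 * t / √(2 * π * n)) atTop (𝓝 0) :=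
    tendsto_const_nhds.div_atTop <| tendsto_sqrt_atTop.comp <|
      tendsto_natCast_atTop_atTop.const_mul_atTop (by positivity)
  rw [tendsto_iff_norm_sub_tendsto_zero]
  refine squeeze_zero' (.of_forall fun n => norm_nonneg _) ?_ bound
  filter_upwards [eventually_ne_atTop 0] with n hn
    using abs_tsum_powMulExpNeg_mul_div_factorial_sub_one_le hn ht

end PowMulExpNeg

theorem numPreorders_eq_card_isTotalPreorder (n : ℕ) :
    numPreorders n = Nat.card {r : Fin n → Fin n → Prop // IsTotalPreorder r} :=
  Nat.card_congr <| Equiv.subtypeEquivRight fun _ =>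
    ⟨fun ⟨hrefl, htrans, htri⟩ => ⟨htrans, fun x y => (htri x y).imp_right
        (Or.rec (fun h => h ▸ hrefl x) id)⟩,
      fun ⟨htrans, htotal⟩ => ⟨fun x => (htotal x x).elim id id, htrans,
        fun x y => (htotal x y).imp_right Or.inr⟩⟩

theorem powMulExpNeg_log_two (n j : ℕ) : powMulExpNeg n (log 2) j = j ^ n / 2 ^ j := by
  rw [powMulExpNeg, div_eq_mul_inv, exp_neg, exp_mul, exp_log two_pos, rpow_natCast]

theorem numPreorders_eq_tsum_powMulExpNeg (n : ℕ) :
    (numPreorders n : ℝ) = (∑' j : ℕ, powMulExpNeg n (log 2) j) / 2 := by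
  have := hasSum_pow_card_div_two_pow (α := Fin n)
  rw [Fintype.card_fin, ← numPreorders_eq_card_isTotalPreorder] at this
  rw [← this.tsum_eq, ← tsum_div_const]
  simp only [powMulExpNeg_log_two, pow_succ, div_div]

/-- `P(n) ∼ (n!/2)·(1/log 2)^{n+1}` as `n → ∞`. -/
theorem numPreorders_asymptotics :
    Filter.Tendsto (fun n : ℕ =>
      (numPreorders n : ℝ) /
        ((n.factorial : ℝ) / 2 * (1 / Real.log 2) ^ (n + 1)))
      Filter.atTop (nhds 1) := by
  refine (tendsto_tsum_powMulExpNeg_mul_div_factorial (log_pos one_lt_two)).congr fun n => ?_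
  rw [numPreorders_eq_tsum_powMulExpNeg, one_div, inv_pow]
  field_simp
end

section
/- For every n ≥ 1, P(n) = Σ_{k=0}^∞ kⁿ / 2^{k+1}. -/
open scoped BigOperators

/-!
Removing the top block of a total preorder on a nonempty `n`-set leaves a total preorder on the
complementary subset `t`, and any proper subset `t` with any total preorder on it arises exactly
once this way. Summing over `t` gives `2 P(n) = ∑ᵢ C(n,i) P(i)` for `n ≥ 1`. The series
`a(n) = ∑ₖ kⁿ / 2^(k+1)` satisfies the same recurrence, because
`∑ᵢ C(n,i) a(i) = ∑ₖ (k+1)ⁿ / 2^(k+1)` is `2 a(n)` after an index shift, and `P(0) = a(0) = 1`.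
-/

open Finset

theorem eq_of_two_nsmul_eq_sum_choose_nsmul {M : Type*} [AddCancelCommMonoid M] {f g : ℕ → M}
    (h0 : f 0 = g 0) (hf : ∀ n ≠ 0, 2 • f n = ∑ i ∈ range (n + 1), n.choose i • f i)
    (hg : ∀ n ≠ 0, 2 • g n = ∑ i ∈ range (n + 1), n.choose i • g i) : f = g := by
  funext n
  induction n using Nat.strong_induction_on with
  | _ n ih =>
    obtain rfl | hn := eq_or_ne n 0
    · exact h0
    have hrec (u : ℕ → M) (hu : 2 • u n = ∑ i ∈ range (n + 1), n.choose i • u i) :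
        u n = ∑ i ∈ range n, n.choose i • u i := by
      rw [sum_range_succ, Nat.choose_self, one_smul, two_nsmul] at hu
      exact add_right_cancel hu
    rw [hrec f (hf n hn), hrec g (hg n hn)]
    exact sum_congr rfl fun i hi => by rw [ih i (mem_range.mp hi)]

section TotalPreorder

variable {α β : Type*}

def IsTotalPre (R : α → α → Prop) : Prop :=
  (∀ x, R x x) ∧ (∀ x y z, R x y → R y z → R x z) ∧ (∀ x y, R x y ∨ x = y ∨ R y x)

abbrev TotalPre (α : Type*) : Type _ := {R : α → α → Prop // IsTotalPre R}

namespace IsTotalPre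

variable {R : α → α → Prop}

theorem total (h : IsTotalPre R) (x y : α) : R x y ∨ R y x := by
  rcases h.2.2 x y with hxy | rfl | hyx
  exacts [.inl hxy, .inl (h.1 x), .inr hyx]

theorem comap {R : β → β → Prop} (h : IsTotalPre R) {f : α → β} (hf : Function.Injective f) :
    IsTotalPre fun x y => R (f x) (f y) := by
  refine ⟨fun x => h.1 _, fun x y z => h.2.1 _ _ _, fun x y => ?_⟩
  rcases h.2.2 (f x) (f y) with hxy | hxy | hyx
  exacts [.inl hxy, .inr (.inl (hf hxy)), .inr (.inr hyx)]

theorem exists_forall_rel [Finite α] [Nonempty α] (h : IsTotalPre R) : ∃ x, ∀ y, R y x := by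
  -- `fun x y => ¬ R x y` is the strict order `y < x`; a minimal element for it is a top element.
  have : IsTrans α fun x y => ¬ R x y :=
    ⟨fun x y z hxy hyz hxz => hxy (h.2.1 _ _ _ hxz ((h.total y z).resolve_left hyz))⟩
  have : Std.Irrefl (α := α) fun x y => ¬ R x y := ⟨fun x hx => hx (h.1 x)⟩
  obtain ⟨x, -, hx⟩ := (Finite.wellFounded_of_trans_of_irrefl fun x y => ¬ R x y).has_min Set.univ
    ⟨Classical.arbitrary α, trivial⟩
  exact ⟨x, fun y => not_not.mp (hx y trivial)⟩

end IsTotalPre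

theorem card_totalPre_congr (e : α ≃ β) : Nat.card (TotalPre α) = Nat.card (TotalPre β) :=
  Nat.card_congr <| (e.arrowCongr (e.arrowCongr (Equiv.refl Prop))).subtypeEquiv fun R =>
    ⟨fun h => h.comap e.symm.injective, fun h => by simpa using h.comap e.injective⟩

theorem card_totalPre [Fintype α] : Nat.card (TotalPre α) = numPreorders (Fintype.card α) :=
  card_totalPre_congr (Fintype.equivFin α)

end TotalPreorder

section TopBlock

variable {α : Type*}

open Classical in
noncomputable def nonmaximals [Fintype α] (R : α → α → Prop) : Finset α :=
  {x | ∃ y, ¬ R y x}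

theorem mem_nonmaximals [Fintype α] {R : α → α → Prop} {x : α} :
    x ∈ nonmaximals R ↔ ∃ y, ¬ R y x := by
  simp [nonmaximals]

def withTopBlock (t : Finset α) (R : t → t → Prop) : α → α → Prop :=
  fun x y => y ∉ t ∨ ∃ (hx : x ∈ t) (hy : y ∈ t), R ⟨x, hx⟩ ⟨y, hy⟩

variable {t : Finset α}

theorem withTopBlock_coe {R : t → t → Prop} (x y : t) : withTopBlock t R x y ↔ R x y := by
  simp [withTopBlock]

theorem IsTotalPre.withTopBlock {R : t → t → Prop} (h : IsTotalPre R) :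
    IsTotalPre (withTopBlock t R) := by
  refine ⟨fun x => ?_, fun x y z hxy hyz => ?_, fun x y => ?_⟩
  · by_cases hx : x ∈ t
    exacts [.inr ⟨hx, hx, h.1 _⟩, .inl hx]
  · obtain hz | ⟨hy, hz, hyz⟩ := hyz
    · exact .inl hz
    obtain hy' | ⟨hx, _, hxy⟩ := hxy
    · exact absurd hy hy'
    · exact .inr ⟨hx, hz, h.2.1 _ _ _ hxy hyz⟩
  · by_cases hy : y ∈ t
    · by_cases hx : x ∈ t
      · rcases h.2.2 ⟨x, hx⟩ ⟨y, hy⟩ with hxy | hxy | hyx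
        exacts [.inl (.inr ⟨hx, hy, hxy⟩), .inr (.inl (congrArg Subtype.val hxy)),
          .inr (.inr (.inr ⟨hy, hx, hyx⟩))]
      · exact .inr (.inr (.inl hx))
    · exact .inl (.inl hy)

theorem nonmaximals_withTopBlock [Fintype α] (ht : t ≠ univ) (R : t → t → Prop) :
    nonmaximals (withTopBlock t R) = t := by
  obtain ⟨z, hz⟩ : ∃ z, z ∉ t := by simpa [eq_univ_iff_forall] using ht
  ext x
  simp only [mem_nonmaximals, withTopBlock, not_or, not_not, not_exists]
  exact ⟨fun ⟨_, hx, _⟩ => hx, fun hx => ⟨z, hx, fun hz' => absurd hz' hz⟩⟩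

theorem withTopBlock_nonmaximals [Fintype α] {R : α → α → Prop} (h : IsTotalPre R) :
    withTopBlock (nonmaximals R) (fun x y => R x y) = R := by
  funext x y
  simp only [withTopBlock, mem_nonmaximals, not_exists, not_not, exists_prop]
  refine propext ⟨?_, fun hxy => ?_⟩
  · rintro (hy | ⟨-, -, hxy⟩)
    exacts [hy x, hxy]
  · by_cases hy : ∀ z, R z y
    · exact .inl hy
    push Not at hy
    obtain ⟨z, hzy⟩ := hy
    exact .inr ⟨⟨z, fun hzx => hzy (h.2.1 _ _ _ hzx hxy)⟩, ⟨z, hzy⟩, hxy⟩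

theorem IsTotalPre.nonmaximals_ne_univ [Fintype α] [Nonempty α] {R : α → α → Prop}
    (h : IsTotalPre R) : nonmaximals R ≠ univ := by
  obtain ⟨x, hx⟩ := h.exists_forall_rel
  intro he
  obtain ⟨y, hyx⟩ := mem_nonmaximals.mp (he ▸ mem_univ x)
  exact hyx (hx y)

end TopBlock

section Recurrence

variable {α : Type*} [Fintype α] [DecidableEq α]

noncomputable def fiberNonmaximalsEquiv {t : Finset α} (ht : t ≠ univ) :
    {R : TotalPre α // nonmaximals R.1 = t} ≃ TotalPre t where
  toFun R := ⟨fun x y => R.1.1 x y, R.1.2.comap Subtype.val_injective⟩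
  invFun R := ⟨⟨withTopBlock t R.1, R.2.withTopBlock⟩, nonmaximals_withTopBlock ht R.1⟩
  left_inv := by
    rintro ⟨⟨R, hR⟩, rfl⟩
    exact Subtype.ext (Subtype.ext (withTopBlock_nonmaximals hR))
  right_inv R := Subtype.ext (funext₂ fun x y => propext (withTopBlock_coe x y))

theorem card_fiber_nonmaximals [Nonempty α] (t : Finset α) :
    Nat.card {R : TotalPre α // nonmaximals R.1 = t} =
      if t = univ then 0 else numPreorders #t := by
  split_ifs with ht
  · subst ht
    exact Nat.card_eq_zero.mpr (.inl ⟨fun R => R.1.2.nonmaximals_ne_univ R.2⟩)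
  · rw [Nat.card_congr (fiberNonmaximalsEquiv ht), card_totalPre, Fintype.card_coe]

theorem two_nsmul_card_totalPre [Nonempty α] :
    2 • Nat.card (TotalPre α) =
      ∑ i ∈ range (Fintype.card α + 1), (Fintype.card α).choose i • numPreorders i := by
  calc 2 • Nat.card (TotalPre α)
      = numPreorders #(univ : Finset α) +
          ∑ t : Finset α, Nat.card {R : TotalPre α // nonmaximals R.1 = t} := by
        rw [two_nsmul, ← Nat.card_sigma, Nat.card_congr (Equiv.sigmaFiberEquiv _), card_totalPre,
          card_univ]
    _ = ∑ t : Finset α, numPreorders #t := by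
        simp only [card_fiber_nonmaximals]
        rw [Fintype.sum_eq_add_sum_compl univ,
          Fintype.sum_eq_add_sum_compl univ fun t => numPreorders #t, if_pos rfl, zero_add]
        exact congrArg _ <| sum_congr rfl fun t ht => if_neg (by simpa using ht)
    _ = _ := by rw [← powerset_univ, sum_powerset_apply_card, card_univ]

end Recurrence

theorem numPreorders_zero : numPreorders 0 = 1 :=
  Nat.card_eq_one_iff_unique.mpr
    ⟨⟨fun _ _ => Subtype.ext (funext fun x => x.elim0)⟩,
      ⟨⟨Fin.elim0, fun x => x.elim0, fun x => x.elim0, fun x => x.elim0⟩⟩⟩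

theorem two_nsmul_numPreorders {n : ℕ} (hn : n ≠ 0) :
    2 • numPreorders n = ∑ i ∈ range (n + 1), n.choose i • numPreorders i := by
  have : Nonempty (Fin n) := Fin.pos_iff_nonempty.mp (Nat.pos_of_ne_zero hn)
  have h := two_nsmul_card_totalPre (α := Fin n)
  rw [Fintype.card_fin] at h
  exact h

noncomputable def fubiniSeries (n : ℕ) : ℝ :=
  ∑' k : ℕ, (k : ℝ) ^ n / 2 ^ (k + 1)

theorem summable_pow_div_two_pow_succ (n : ℕ) :
    Summable fun k : ℕ => (k : ℝ) ^ n / 2 ^ (k + 1) := by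
  refine ((summable_pow_mul_geometric_of_norm_lt_one n (r := (2 : ℝ)⁻¹) ?_).div_const 2).congr
    fun k => ?_
  · norm_num
  · rw [pow_succ, inv_pow, ← div_eq_mul_inv, div_div]

theorem fubiniSeries_zero : fubiniSeries 0 = 1 := by
  unfold fubiniSeries
  convert tsum_geometric_two' 1 using 2
  funext k
  ring

theorem two_nsmul_fubiniSeries {n : ℕ} (hn : n ≠ 0) :
    2 • fubiniSeries n = ∑ i ∈ range (n + 1), n.choose i • fubiniSeries i := by
  have hshift : 2 • fubiniSeries n = ∑' k : ℕ, ((k : ℝ) + 1) ^ n / 2 ^ (k + 1) := by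
    rw [fubiniSeries, (summable_pow_div_two_pow_succ n).tsum_eq_zero_add, nsmul_eq_mul,
      Nat.cast_ofNat, mul_add, ← tsum_mul_left]
    simp only [Nat.cast_zero, zero_pow hn, zero_div, mul_zero, zero_add, Nat.cast_succ]
    exact tsum_congr fun k => by ring
  have hbinom (k : ℕ) : ((k : ℝ) + 1) ^ n / 2 ^ (k + 1) =
      ∑ i ∈ range (n + 1), (n.choose i : ℝ) * ((k : ℝ) ^ i / 2 ^ (k + 1)) := by
    rw [add_pow, sum_div]
    exact sum_congr rfl fun i _ => by ring
  rw [hshift, tsum_congr hbinom,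
    Summable.tsum_finsetSum fun i _ => (summable_pow_div_two_pow_succ i).mul_left _]
  exact sum_congr rfl fun i _ => by rw [nsmul_eq_mul, fubiniSeries, tsum_mul_left]

theorem numPreorders_eq_tsum_general (n : ℕ) :
    (numPreorders n : ℝ) = ∑' k : ℕ, (k : ℝ) ^ n / 2 ^ (k + 1) := by
  have hrec (m : ℕ) (hm : m ≠ 0) : 2 • (numPreorders m : ℝ) =
      ∑ i ∈ range (m + 1), m.choose i • (numPreorders i : ℝ) := by
    simpa only [map_nsmul, map_sum, Nat.coe_castAddMonoidHom] using
      congrArg (Nat.castAddMonoidHom ℝ) (two_nsmul_numPreorders hm)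
  have h0 : (numPreorders 0 : ℝ) = fubiniSeries 0 := by
    rw [numPreorders_zero, fubiniSeries_zero, Nat.cast_one]
  exact congrFun (eq_of_two_nsmul_eq_sum_choose_nsmul (f := fun m => (numPreorders m : ℝ))
    h0 hrec fun _ => two_nsmul_fubiniSeries) n

/-- `P(n) = Σ_{k=0}^∞ kⁿ/2^{k+1}` for `n ≥ 1`. -/
theorem numPreorders_eq_tsum (n : ℕ) (hn : 1 ≤ n) :
    (numPreorders n : ℝ) = ∑' k : ℕ, (k : ℝ) ^ n / 2 ^ (k + 1) :=
  numPreorders_eq_tsum_general n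
end
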